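/- Let (X, d₀) be a compact metric space and α ≥ 1. Suppose (d_j) is a sequence of metrics on X such that (1/α)·d₀(x,y) ≤ d_j(x,y) ≤ α·d₀(x,y) for all x, y ∈ X and all j. Then there exist a subsequence (d_{j_k}) and a metric d_∞ on X satisfying (1/α)·d₀(x,y) ≤ d_∞(x,y) ≤ α·d₀(x,y) for all x, y, such that d_{j_k} converges uniformly to d_∞, i.e. sup{ |d_{j_k}(x,y) − d_∞(x,y)| : x, y ∈ X } → 0 as k → ∞. -/
import Mathlib

open BoundedContinuousFunction Filter Topology

/-- A function `d : X → X → ℝ` is a metric: nonnegative, vanishing exactly on the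
diagonal, symmetric, and satisfying the triangle inequality. -/
def IsMetric {X : Type*} (d : X → X → ℝ) : Prop :=
  (∀ x y, 0 ≤ d x y) ∧ (∀ x y, d x y = 0 ↔ x = y) ∧
  (∀ x y, d x y = d y x) ∧ (∀ x y z, d x z ≤ d x y + d y z)

/-- Huang–Lee–Sormani, metric-convergence part. Let `(X, d₀)` be a
compact metric space and `α ≥ 1`. If `(d_j)` is a sequence of metrics on `X` with
`(1/α)·d₀ ≤ d_j ≤ α·d₀` for all `j`, then there is a subsequence `(d_{j_k})` and a
metric `d_∞` on `X` satisfying the same two-sided bounds such that `d_{j_k}` converges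
uniformly to `d_∞`. -/
theorem uniformly_comparable_metrics_subsequence {X : Type*} [MetricSpace X]
    [CompactSpace X] (α : ℝ) (hα : 1 ≤ α) (d : ℕ → X → X → ℝ)
    (hmet : ∀ j, IsMetric (d j))
    (hbd : ∀ j, ∀ x y : X,
      (1 / α) * dist x y ≤ d j x y ∧ d j x y ≤ α * dist x y) :
    ∃ φ : ℕ → ℕ, StrictMono φ ∧
      ∃ dinf : X → X → ℝ, IsMetric dinf ∧
        (∀ x y : X, (1 / α) * dist x y ≤ dinf x y ∧ dinf x y ≤ α * dist x y) ∧
        (∀ ε : ℝ, 0 < ε → ∃ N : ℕ, ∀ k ≥ N, ∀ x y : X,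
          |d (φ k) x y - dinf x y| < ε) := by
  have hα0 : (0:ℝ) < α := lt_of_lt_of_le one_pos hα
  -- uniform Lipschitz estimate on the product
  have key : ∀ j (p q : X × X), dist (d j p.1 p.2) (d j q.1 q.2) ≤ 2 * α * dist p q := by
    intro j p q
    obtain ⟨hnn, hzero, hsym, htri⟩ := hmet j
    have h1 : d j p.1 p.2 - d j q.1 q.2 ≤ d j p.1 q.1 + d j q.2 p.2 := by
      have := htri p.1 q.1 p.2
      have := htri q.1 q.2 p.2
      linarith
    have h2 : d j q.1 q.2 - d j p.1 p.2 ≤ d j p.1 q.1 + d j q.2 p.2 := by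
      have := htri q.1 p.1 q.2
      have := htri p.1 p.2 q.2
      have := hsym q.1 p.1
      have := hsym p.2 q.2
      linarith
    have hb1 : d j p.1 q.1 ≤ α * dist p.1 q.1 := (hbd j p.1 q.1).2
    have hb2 : d j q.2 p.2 ≤ α * dist q.2 p.2 := (hbd j q.2 p.2).2
    have hd1 : dist p.1 q.1 ≤ dist p q := le_max_left _ _
    have hd2 : dist q.2 p.2 ≤ dist p q := by
      rw [dist_comm q.2 p.2]; exact le_max_right _ _
    rw [Real.dist_eq, abs_sub_le_iff]
    constructor <;> nlinarith
  -- continuity of each `d j` on the product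
  have hcont : ∀ j, Continuous (fun p : X × X => d j p.1 p.2) := by
    intro j
    have : LipschitzWith (⟨2 * α, by positivity⟩ : NNReal) (fun p : X × X => d j p.1 p.2) :=
      LipschitzWith.of_dist_le_mul (fun p q => key j p q)
    exact this.continuous
  -- bounded continuous functions
  set D : ℝ := Metric.diam (Set.univ : Set X) with hD
  have hDnn : 0 ≤ D := Metric.diam_nonneg
  have hdistD : ∀ x y : X, dist x y ≤ D := fun x y =>
    Metric.dist_le_diam_of_mem (isCompact_univ.isBounded) (Set.mem_univ x) (Set.mem_univ y)
  have hrange : ∀ j (p : X × X), d j p.1 p.2 ∈ Set.Icc 0 (α * D) := by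
    intro j p
    refine ⟨(hmet j).1 p.1 p.2, le_trans (hbd j p.1 p.2).2 ?_⟩
    exact mul_le_mul_of_nonneg_left (hdistD _ _) hα0.le
  set F : ℕ → (X × X →ᵇ ℝ) := fun j =>
    BoundedContinuousFunction.mkOfBound ⟨fun p => d j p.1 p.2, hcont j⟩ (2 * α * D)
      (fun p q => le_trans (key j p q) (by
        have hpq : dist p q ≤ D := by
          have h1 : dist p.1 q.1 ≤ D := hdistD _ _
          have h2 : dist p.2 q.2 ≤ D := hdistD _ _
          exact max_le h1 h2
        nlinarith)) with hF
  have hFapp : ∀ j (p : X × X), F j p = d j p.1 p.2 := fun j p => rfl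
  -- Arzelà–Ascoli
  have hcomp : IsCompact (closure (Set.range F)) := by
    apply BoundedContinuousFunction.arzela_ascoli (Set.Icc (0:ℝ) (α * D))
      isCompact_Icc (Set.range F)
    · rintro f p ⟨j, rfl⟩
      exact hrange j p
    · apply Metric.equicontinuous_of_continuity_modulus (fun t => 2 * α * t)
      · have : Continuous (fun t : ℝ => 2 * α * t) := by continuity
        simpa using this.tendsto 0
      · rintro p q ⟨f, ⟨j, rfl⟩⟩
        exact key j p q
  obtain ⟨g, -, φ, hφ, hconv⟩ := hcomp.tendsto_subseq
    (fun j => subset_closure (Set.mem_range_self j) : ∀ j, F j ∈ closure (Set.range F))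
  refine ⟨φ, hφ, fun x y => g (x, y), ?_, ?_, ?_⟩
  · -- pointwise convergence
    have hpt : ∀ x y : X, Tendsto (fun k => d (φ k) x y) atTop (𝓝 (g (x, y))) := by
      intro x y
      rw [Metric.tendsto_atTop]
      intro ε hε
      obtain ⟨N, hN⟩ := Metric.tendsto_atTop.mp hconv ε hε
      exact ⟨N, fun k hk => lt_of_le_of_lt
        ((hFapp (φ k) (x, y)) ▸ BoundedContinuousFunction.dist_coe_le_dist (x, y)) (hN k hk)⟩
    refine ⟨?_, ?_, ?_, ?_⟩
    · intro x y
      exact ge_of_tendsto' (hpt x y) (fun k => (hmet (φ k)).1 x y)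
    · intro x y
      constructor
      · intro h
        have h : g (x, y) = 0 := h
        have hlow : (1 / α) * dist x y ≤ g (x, y) :=
          ge_of_tendsto' (hpt x y) (fun k => (hbd (φ k) x y).1)
        rw [h] at hlow
        have : dist x y ≤ 0 := by
          have h1α : 0 < 1 / α := by positivity
          nlinarith [dist_nonneg (x := x) (y := y)]
        exact dist_le_zero.mp this
      · rintro rfl
        have hup : g (x, x) ≤ α * dist x x :=
          le_of_tendsto' (hpt x x) (fun k => (hbd (φ k) x x).2)
        have hlo : 0 ≤ g (x, x) :=
          ge_of_tendsto' (hpt x x) (fun k => (hmet (φ k)).1 x x)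
        simp at hup
        linarith
    · intro x y
      exact tendsto_nhds_unique (hpt x y)
        ((hpt y x).congr (fun k => ((hmet (φ k)).2.2.1 y x)))
    · intro x y z
      exact le_of_tendsto_of_tendsto' (hpt x z) ((hpt x y).add (hpt y z))
        (fun k => (hmet (φ k)).2.2.2 x y z)
  · intro x y
    have hpt : Tendsto (fun k => d (φ k) x y) atTop (𝓝 (g (x, y))) := by
      rw [Metric.tendsto_atTop]
      intro ε hε
      obtain ⟨N, hN⟩ := Metric.tendsto_atTop.mp hconv ε hε
      exact ⟨N, fun k hk => lt_of_le_of_lt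
        ((hFapp (φ k) (x, y)) ▸ BoundedContinuousFunction.dist_coe_le_dist (x, y)) (hN k hk)⟩
    exact ⟨ge_of_tendsto' hpt (fun k => (hbd (φ k) x y).1),
      le_of_tendsto' hpt (fun k => (hbd (φ k) x y).2)⟩
  · intro ε hε
    have := (Metric.tendsto_atTop.mp hconv) (ε / 2) (by positivity)
    obtain ⟨N, hN⟩ := this
    refine ⟨N, fun k hk x y => ?_⟩
    have h1 : dist (F (φ k) (x, y)) (g (x, y)) ≤ dist (F (φ k)) g :=
      BoundedContinuousFunction.dist_coe_le_dist _
    have h2 : dist (F (φ k)) g < ε / 2 := hN k hk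
    calc |d (φ k) x y - g (x, y)| = dist (F (φ k) (x, y)) (g (x, y)) := by
          rw [Real.dist_eq, hFapp]
      _ ≤ dist (F (φ k)) g := h1
      _ < ε / 2 := h2
      _ < ε := by linarith
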